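/- arXiv:1302.5965 — 8 statements merged into one kernel-verified Lean document; each statement's English description precedes it below -/
import Mathlib

section
/- Let S be a semigroup, and let K and Ω be non-empty subsets of S such that every element of K is left-cancellable. Then adh_K(Ω) \ int_K(Ω) is contained in the disjoint union of ∂_K(Ω) and the union over k ∈ K of L_k^{-1}(Ω \ kΩ), where adh_K(Ω) := {s ∈ S : Ks ∩ Ω ≠ ∅}. -/
/-- For a semigroup `S` and nonempty subsets `K, Ω ⊆ S` with every element of `K`
left-cancellable, `∂*_K(Ω) = adh_K(Ω) \ int_K(Ω)` is contained in the disjoint union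
of `∂_K(Ω) = Ω \ int_K(Ω)` and `⋃ k ∈ K, L_k⁻¹(Ω \ kΩ)`. -/
theorem star_boundary_subset_disjoint_union {S : Type*} [Semigroup S] (K Ω : Set S)
    (hK : K.Nonempty) (hΩ : Ω.Nonempty)
    (hc : ∀ k ∈ K, Function.Injective (fun t : S => k * t)) :
    ({s : S | ∃ k ∈ K, k * s ∈ Ω} \ {s ∈ Ω | ∀ k ∈ K, k * s ∈ Ω} ⊆
        (Ω \ {s ∈ Ω | ∀ k ∈ K, k * s ∈ Ω}) ∪
          ⋃ k ∈ K, (fun t : S => k * t) ⁻¹' (Ω \ ((fun t : S => k * t) '' Ω))) ∧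
      Disjoint (Ω \ {s ∈ Ω | ∀ k ∈ K, k * s ∈ Ω})
        (⋃ k ∈ K, (fun t : S => k * t) ⁻¹' (Ω \ ((fun t : S => k * t) '' Ω))) := by
  constructor
  · rintro s ⟨⟨k, hk, hks⟩, hns⟩
    by_cases hsΩ : s ∈ Ω
    · exact Or.inl ⟨hsΩ, hns⟩
    · refine Or.inr (Set.mem_biUnion hk ⟨hks, ?_⟩)
      rintro ⟨t, ht, hte⟩
      exact hsΩ (hc k hk hte ▸ ht)
  · rw [Set.disjoint_left]
    rintro s ⟨hsΩ, -⟩ hs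
    obtain ⟨k, hk, -, hnot⟩ := Set.mem_iUnion₂.mp hs
    exact hnot ⟨s, hsΩ, rfl⟩
end

section
/- Let S be a semigroup, and let K and Ω be non-empty finite subsets of S such that every element of K is left-cancellable. Then ∂*_K(Ω) := adh_K(Ω) \ int_K(Ω) is finite and |∂*_K(Ω)| ≤ 2 Σ_{k∈K} |kΩ \ Ω|. -/
/-- For nonempty finite subsets `K, Ω` of a semigroup `S` with every element of `K`
left-cancellable, `∂*_K(Ω) = adh_K(Ω) \ int_K(Ω)` is finite and
`|∂*_K(Ω)| ≤ 2 Σ_{k ∈ K} |kΩ \ Ω|`. -/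
theorem star_boundary_finite_card_le {S : Type*} [Semigroup S] [DecidableEq S]
    (K Ω : Finset S) (hK : K.Nonempty) (hΩ : Ω.Nonempty)
    (hc : ∀ k ∈ K, Function.Injective (fun t : S => k * t)) :
    ({s : S | ∃ k ∈ K, k * s ∈ Ω} \ {s : S | s ∈ Ω ∧ ∀ k ∈ K, k * s ∈ Ω}).Finite ∧
      Nat.card ({s : S | ∃ k ∈ K, k * s ∈ Ω} \ {s : S | s ∈ Ω ∧ ∀ k ∈ K, k * s ∈ Ω} : Set S) ≤
        2 * ∑ k ∈ K, ((Ω.image (fun t : S => k * t)) \ Ω).card := by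
  classical
  set B := ({s : S | ∃ k ∈ K, k * s ∈ Ω} \ {s : S | s ∈ Ω ∧ ∀ k ∈ K, k * s ∈ Ω}) with hB
  -- For each k, the "bad" set D k
  set D : S → Finset S := fun k => (Ω.image (fun t : S => k * t) \ Ω) ∪ (Ω \ Ω.image (fun t : S => k * t)) with hD
  set F : Finset (S × S) := K.biUnion (fun k => (D k).image (fun x => (k, x))) with hF
  -- every s ∈ B has some k ∈ K with k*s ∈ D k
  have key : ∀ s ∈ B, ∃ k ∈ K, k * s ∈ D k := by
    intro s hs
    obtain ⟨⟨k, hkK, hks⟩, hnot⟩ := hs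
    by_cases hsΩ : s ∈ Ω
    · have : ¬ ∀ k ∈ K, k * s ∈ Ω := fun h => hnot ⟨hsΩ, h⟩
      push_neg at this
      obtain ⟨k', hk'K, hk's⟩ := this
      refine ⟨k', hk'K, ?_⟩
      simp only [hD, Finset.mem_union, Finset.mem_sdiff, Finset.mem_image]
      exact Or.inl ⟨⟨s, hsΩ, rfl⟩, hk's⟩
    · refine ⟨k, hkK, ?_⟩
      simp only [hD, Finset.mem_union, Finset.mem_sdiff, Finset.mem_image]
      refine Or.inr ⟨hks, ?_⟩
      rintro ⟨t, htΩ, ht⟩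
      exact hsΩ (by rwa [← hc k hkK ht])
  -- choose such a k for each s
  choose kf hkf1 hkf2 using key
  -- the map g s = (kf s, kf s * s) is injective on B with image in F
  have hmaps : ∀ s (hs : s ∈ B), (kf s hs, kf s hs * s) ∈ F := by
    intro s hs
    simp only [hF, Finset.mem_biUnion, Finset.mem_image]
    exact ⟨kf s hs, hkf1 s hs, kf s hs * s, hkf2 s hs, rfl⟩
  -- turn into a total function using junk values
  have hBsub : B ⊆ (fun s => if h : s ∈ B then (kf s h, kf s h * s) else (s, s)) ⁻¹' (F : Set (S × S)) := by
    intro s hs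
    simp only [Set.mem_preimage, dif_pos hs]
    exact hmaps s hs
  have hinj : Set.InjOn (fun s => if h : s ∈ B then (kf s h, kf s h * s) else (s, s)) B := by
    intro a ha b hb hab
    simp only [dif_pos ha, dif_pos hb, Prod.mk.injEq] at hab
    obtain ⟨h1, h2⟩ := hab
    rw [h1] at h2
    exact hc _ (hkf1 b hb) h2
  have hfin : B.Finite := by
    apply Set.Finite.of_finite_image _ hinj
    exact (F.finite_toSet).subset (Set.image_subset_iff.mpr hBsub)
  refine ⟨hfin, ?_⟩
  rw [Nat.card_coe_set_eq]
  calc B.ncard ≤ (F : Set (S × S)).ncard :=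
        Set.ncard_le_ncard_of_injOn _ (fun a ha => hBsub ha) hinj F.finite_toSet
    _ = F.card := by rw [Set.ncard_coe_finset]
    _ ≤ ∑ k ∈ K, ((D k).image (fun x => (k, x))).card := Finset.card_biUnion_le
    _ ≤ ∑ k ∈ K, (D k).card := Finset.sum_le_sum (fun k _ => Finset.card_image_le)
    _ ≤ ∑ k ∈ K, 2 * ((Ω.image (fun t : S => k * t)) \ Ω).card := by
        refine Finset.sum_le_sum (fun k hk => ?_)
        have hcard : (Ω.image (fun t : S => k * t)).card = Ω.card :=
          Finset.card_image_of_injective _ (hc k hk)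
        have hsw : (Ω \ Ω.image (fun t : S => k * t)).card
            = ((Ω.image (fun t : S => k * t)) \ Ω).card := by
          rw [Finset.card_sdiff_comm hcard.symm]
        calc (D k).card ≤ ((Ω.image (fun t : S => k * t)) \ Ω).card
              + (Ω \ Ω.image (fun t : S => k * t)).card := Finset.card_union_le _ _
          _ = 2 * ((Ω.image (fun t : S => k * t)) \ Ω).card := by rw [hsw]; ring
    _ = 2 * ∑ k ∈ K, ((Ω.image (fun t : S => k * t)) \ Ω).card := by rw [Finset.mul_sum]
end

section
/- Let S be a left-cancellative left-amenable semigroup with Følner net (F_j)_{j∈J}, let K be a non-empty finite subset of S, and let T be a K-tiling of S. Define T_j := {t ∈ T : Kt ⊆ F_j}. Then there exist a real δ > 0 and an index j₀ such that |T_j| ≥ δ|F_j| for all j ≥ j₀. In fact one may take δ = 1/(4|K|²). -/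
/-!
Every `s ∈ S` satisfies `k₁ s = k₂ t` for some `k₁, k₂ ∈ K` and a tile `t ∈ T`, and by left
cancellation `s ↦ (k₁, k₂, t)` is injective. For an almost invariant `F`, all `s ∈ F` off a small
boundary have `k₁ s ∈ F`, so their tile `t` satisfies `k₂ t ∈ F`; and such a tile, off the same
boundary, even satisfies `K t ⊆ F`. Hence `|F| ≤ |K|² |T_F| + (|K|² + 1) · |boundary|`, while the
boundary has size at most `2 |K| ε |F|`.
-/

open Filter Finset

section Counting

variable {S : Type*} [Semigroup S] [IsLeftCancelMul S]

/-- `k⁻¹F = {t | k * t ∈ F}`, finite by left cancellation. -/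
noncomputable def mulLeftPreimage (k : S) (F : Finset S) : Finset S :=
  F.preimage (k * ·) (mul_right_injective k).injOn

@[simp]
theorem mem_mulLeftPreimage {k t : S} {F : Finset S} : t ∈ mulLeftPreimage k F ↔ k * t ∈ F :=
  Finset.mem_preimage

theorem card_mulLeftPreimage_le (k : S) (F : Finset S) : #(mulLeftPreimage k F) ≤ #F :=
  card_le_card_of_injOn (k * ·) (fun _ ht => mem_mulLeftPreimage.1 ht)
    (mul_right_injective k).injOn

variable [DecidableEq S]

theorem card_sdiff_mulLeftPreimage_le (k : S) (F : Finset S) :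
    #(F \ mulLeftPreimage k F) ≤ #(F.image (k * ·) \ F) := by
  refine card_le_card_of_injOn (k * ·) (fun t ht => ?_) (mul_right_injective k).injOn
  simp only [coe_sdiff, Set.mem_sdiff, mem_coe, mem_mulLeftPreimage] at ht ⊢
  exact ⟨mem_image_of_mem _ ht.1, ht.2⟩

theorem card_symmDiff_mulLeftPreimage_le (k : S) (F : Finset S) :
    #(symmDiff (mulLeftPreimage k F) F) ≤ 2 * #(F.image (k * ·) \ F) := by
  have hle := card_sdiff_le_card_sdiff_iff.2 (card_mulLeftPreimage_le k F)
  have := card_sdiff_mulLeftPreimage_le k F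
  calc #(symmDiff (mulLeftPreimage k F) F)
      ≤ #(mulLeftPreimage k F \ F) + #(F \ mulLeftPreimage k F) := by
        rw [symmDiff_def]; exact card_union_le _ _
    _ ≤ 2 * #(F.image (k * ·) \ F) := by omega

noncomputable def leftBoundary (K F : Finset S) : Finset S :=
  K.biUnion fun k => symmDiff (mulLeftPreimage k F) F

theorem card_leftBoundary_le (K F : Finset S) :
    #(leftBoundary K F) ≤ ∑ k ∈ K, 2 * #(F.image (k * ·) \ F) :=
  card_biUnion_le.trans (sum_le_sum fun k _ => card_symmDiff_mulLeftPreimage_le k F)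

theorem mul_mem_iff_of_notMem_leftBoundary {K F : Finset S} {k t : S} (hk : k ∈ K)
    (ht : t ∉ leftBoundary K F) : k * t ∈ F ↔ t ∈ F := by
  simp only [leftBoundary, mem_biUnion, not_exists, not_and] at ht
  simpa [mem_symmDiff, iff_def, not_or] using ht k hk

theorem card_sdiff_leftBoundary_le {K : Finset S} {T : Set S} [DecidablePred (· ∈ T)]
    (hcov : ∀ s, ∃ t ∈ T, ∃ k₁ ∈ K, ∃ k₂ ∈ K, k₁ * s = k₂ * t) (F : Finset S) :
    #(F \ leftBoundary K F) ≤
      #K ^ 2 * #((K.biUnion fun k => mulLeftPreimage k F).filter (· ∈ T)) := by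
  choose t ht k₁ hk₁ k₂ hk₂ heq using hcov
  rw [sq, mul_assoc, ← card_product, ← card_product]
  refine card_le_card_of_injOn (fun s => (k₁ s, k₂ s, t s)) (fun s hs => ?_) ?_
  · simp only [coe_sdiff, Set.mem_sdiff, mem_coe] at hs
    have hk₁s : k₁ s * s ∈ F := (mul_mem_iff_of_notMem_leftBoundary (hk₁ s) hs.2).2 hs.1
    simp only [coe_product, Set.mem_prod, mem_coe, mem_filter, mem_biUnion, mem_mulLeftPreimage]
    exact ⟨hk₁ s, hk₂ s, ⟨k₂ s, hk₂ s, heq s ▸ hk₁s⟩, ht s⟩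
  · intro s _ s' _ h
    simp only [Prod.mk.injEq] at h
    apply mul_left_cancel (a := k₁ s)
    rw [heq s, h.2.1, h.2.2, ← heq s', ← h.1]

theorem card_le_of_covering {K : Finset S} (hK : K.Nonempty) {T : Set S}
    (hcov : ∀ s, ∃ t ∈ T, ∃ k₁ ∈ K, ∃ k₂ ∈ K, k₁ * s = k₂ * t) (F : Finset S) :
    #F ≤ #K ^ 2 * {t ∈ T | ∀ k ∈ K, k * t ∈ F}.ncard + (#K ^ 2 + 1) * #(leftBoundary K F) := by
  classical
  set B := leftBoundary K F
  set C := (K.biUnion fun k => mulLeftPreimage k F).filter (· ∈ T)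
  have hinside : {t ∈ T | ∀ k ∈ K, k * t ∈ F} = ↑(C.filter fun t => ∀ k ∈ K, k * t ∈ F) := by
    obtain ⟨k₀, hk₀⟩ := hK
    ext t
    simp only [C, Set.mem_ofPred_eq, coe_filter, mem_filter, mem_biUnion, mem_mulLeftPreimage]
    exact ⟨fun h => ⟨⟨⟨k₀, hk₀, h.2 k₀ hk₀⟩, h.1⟩, h.2⟩, fun h => ⟨h.1.2, h.2⟩⟩
  have hstraddling : C.filter (fun t => ¬∀ k ∈ K, k * t ∈ F) ⊆ B := by
    intro t ht
    simp only [C, mem_filter, mem_biUnion, mem_mulLeftPreimage] at ht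
    obtain ⟨⟨⟨k, hk, hkt⟩, -⟩, hout⟩ := ht
    by_contra hB
    exact hout fun k' hk' => (mul_mem_iff_of_notMem_leftBoundary hk' hB).2
      ((mul_mem_iff_of_notMem_leftBoundary hk hB).1 hkt)
  have hC : #C ≤ {t ∈ T | ∀ k ∈ K, k * t ∈ F}.ncard + #B := by
    rw [hinside, Set.ncard_coe_finset, ← card_filter_add_card_filter_not (s := C)
      (fun t => ∀ k ∈ K, k * t ∈ F)]
    exact Nat.add_le_add_left (card_le_card hstraddling) _
  calc #F ≤ #(F \ B) + #B := card_le_card_sdiff_add_card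
    _ ≤ #K ^ 2 * #C + #B := Nat.add_le_add_right (card_sdiff_leftBoundary_le hcov F) _
    _ ≤ #K ^ 2 * ({t ∈ T | ∀ k ∈ K, k * t ∈ F}.ncard + #B) + #B := by gcongr
    _ = _ := by ring

end Counting

theorem card_le_mul_card_of_div_lt {x c : ℕ} {ε : ℝ} (hxc : x ≤ c) (h : (x : ℝ) / c < ε) :
    (x : ℝ) ≤ ε * c := by
  rcases c.eq_zero_or_pos with rfl | hc
  · simp [Nat.le_zero.1 hxc]
  · exact ((div_lt_iff₀ (by exact_mod_cast hc)).1 h).le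

theorem eventually_card_leftBoundary_le {S J : Type*} [Semigroup S] [IsLeftCancelMul S]
    [DecidableEq S] [Preorder J] {F : J → Finset S}
    (hFol : ∀ s : S, Tendsto (fun j => (#((F j).image (s * ·) \ F j) : ℝ) / #(F j)) atTop (nhds 0))
    (K : Finset S) {ε : ℝ} (hε : 0 < ε) :
    ∀ᶠ j in atTop, (#(leftBoundary K (F j)) : ℝ) ≤ 2 * #K * ε * #(F j) := by
  have hev : ∀ᶠ j in atTop, ∀ k ∈ K, (#((F j).image (k * ·) \ F j) : ℝ) ≤ ε * #(F j) :=
    (eventually_all_finset K).2 fun k _ => ((hFol k).eventually (gt_mem_nhds hε)).mono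
      fun j => card_le_mul_card_of_div_lt ((card_le_card sdiff_subset).trans card_image_le)
  filter_upwards [hev] with j hj
  calc (#(leftBoundary K (F j)) : ℝ) ≤ ∑ k ∈ K, 2 * (#((F j).image (k * ·) \ F j) : ℝ) := by
        exact_mod_cast card_leftBoundary_le K (F j)
    _ ≤ ∑ _k ∈ K, 2 * (ε * #(F j)) := sum_le_sum fun k hk => by linarith [hj k hk]
    _ = 2 * #K * ε * #(F j) := by rw [sum_const, nsmul_eq_mul]; ring

theorem tiling_lower_density_general {S J : Type*} [Semigroup S] [DecidableEq S]
    [SemilatticeSup J] [Nonempty J]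
    (hlc : ∀ s : S, Function.Injective (fun t : S => s * t))
    (F : J → Finset S)
    (hFol : ∀ s : S, Filter.Tendsto
      (fun j => ((((F j).image (fun t : S => s * t)) \ F j).card : ℝ) / (F j).card)
      Filter.atTop (nhds 0))
    (K : Finset S) (hK : K.Nonempty) (T : Set S)
    (hT2 : ∀ s : S, ∃ t ∈ T,
      (((fun k : S => k * s) '' (K : Set S)) ∩ ((fun k : S => k * t) '' (K : Set S))).Nonempty) :
    ∃ j₀ : J, ∀ j ≥ j₀,
      (Nat.card {t ∈ T | ∀ k ∈ K, k * t ∈ F j} : ℝ) ≥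
        (1 / (4 * (K.card : ℝ) ^ 2)) * (F j).card := by
  have : IsLeftCancelMul S := ⟨hlc⟩
  have hcov : ∀ s, ∃ t ∈ T, ∃ k₁ ∈ K, ∃ k₂ ∈ K, k₁ * s = k₂ * t := fun s => by
    obtain ⟨t, ht, _, ⟨k₁, hk₁, rfl⟩, ⟨k₂, hk₂, h⟩⟩ := hT2 s
    exact ⟨t, ht, k₁, hk₁, k₂, hk₂, h.symm⟩
  -- `ε` is chosen so that the boundary term `(|K|² + 1) · 2|K|ε|F|` in `card_le_of_covering` is
  -- `|F| / 2`.
  set ε : ℝ := 1 / (4 * K.card * ((K.card : ℝ) ^ 2 + 1)) with hε_def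
  have hε : 0 < ε := by positivity
  have hboundary : ((K.card : ℝ) ^ 2 + 1) * (2 * K.card * ε) = 1 / 2 := by
    rw [hε_def]; field_simp; ring
  obtain ⟨j₀, hj₀⟩ := eventually_atTop.1 (eventually_card_leftBoundary_le hFol K hε)
  refine ⟨j₀, fun j hj => ?_⟩
  have hcount : ((F j).card : ℝ) ≤ (K.card : ℝ) ^ 2 * {t ∈ T | ∀ k ∈ K, k * t ∈ F j}.ncard
      + ((K.card : ℝ) ^ 2 + 1) * (leftBoundary K (F j)).card := by
    exact_mod_cast card_le_of_covering hK hcov (F j)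
  rw [Nat.card_coe_set_eq, ge_iff_le, div_mul_eq_mul_div, one_mul, div_le_iff₀ (by positivity)]
  nlinarith [hj₀ j hj]

/-- Let `S` be a left-cancellative semigroup with a Følner net `(F_j)`, let `K` be a
nonempty finite subset and `T` a `K`-tiling of `S`. Put `T_j = {t ∈ T : Kt ⊆ F_j}`.
Then, with `δ = 1/(4|K|²) > 0`, there is `j₀` with `|T_j| ≥ δ|F_j|` for all `j ≥ j₀`. -/
theorem tiling_lower_density {S J : Type*} [Semigroup S] [DecidableEq S]
    [SemilatticeSup J] [Nonempty J]
    (hlc : ∀ s : S, Function.Injective (fun t : S => s * t))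
    (F : J → Finset S) (hFne : ∀ j, (F j).Nonempty)
    (hFol : ∀ s : S, Filter.Tendsto
      (fun j => ((((F j).image (fun t : S => s * t)) \ F j).card : ℝ) / (F j).card)
      Filter.atTop (nhds 0))
    (K : Finset S) (hK : K.Nonempty) (T : Set S)
    (hT1 : ∀ t₁ ∈ T, ∀ t₂ ∈ T, t₁ ≠ t₂ →
      Disjoint ((fun k : S => k * t₁) '' (K : Set S)) ((fun k : S => k * t₂) '' (K : Set S)))
    (hT2 : ∀ s : S, ∃ t ∈ T,
      (((fun k : S => k * s) '' (K : Set S)) ∩ ((fun k : S => k * t) '' (K : Set S))).Nonempty) :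
    ∃ j₀ : J, ∀ j ≥ j₀,
      (Nat.card {t ∈ T | ∀ k ∈ K, k * t ∈ F j} : ℝ) ≥
        (1 / (4 * (K.card : ℝ) ^ 2)) * (F j).card :=
  tiling_lower_density_general hlc F hFol K hK T hT2
end

section
/- Let S be a left-cancellative left-amenable semigroup, F = (F_j)_{j∈J} a Følner net for S, and A a finite set. If τ : A^S → A^S is a cellular automaton and X ⊆ A^S, then ent_F(τ(X)) ≤ ent_F(X), i.e., cellular automata do not increase entropy. -/
/-!
To know `τ x` on a window `F` one only needs `x` on `F ∪ M * F`, so the number of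
`F`-patterns of `τ(X)` is at most the number of `F`-patterns of `X` times `|A| ^ |(F ∪ M * F) \ F|`.
Since `(F ∪ M * F) \ F ⊆ ⋃ m ∈ M, m F \ F`, the Følner condition makes the extra factor
contribute `o(|F|)` to the logarithm, which disappears in the limsup.
-/

open Filter Finset Topology
open scoped Pointwise

/-- The entropy of a set of configurations `X ⊆ A^S` with respect to the net `F`:
`ent F X = limsup_j log|π_{F_j}(X)| / |F_j|`. -/
noncomputable def ent {S A J : Type*} [Preorder J] (F : J → Finset S)
    (X : Set (S → A)) : ℝ :=
  Filter.limsup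
    (fun j => Real.log (Nat.card ((fun (x : S → A) (t : F j) => x ↑t) '' X)) / (F j).card)
    Filter.atTop

theorem Real.log_le_log_add_mul_log_of_le_mul_pow {a b k c : ℕ} (h : a ≤ b * k ^ c) :
    Real.log a ≤ Real.log b + c * Real.log k := by
  rcases Nat.eq_zero_or_pos a with rfl | ha
  · simp only [Nat.cast_zero, Real.log_zero]
    exact add_nonneg (Real.log_natCast_nonneg b)
      (mul_nonneg c.cast_nonneg (Real.log_natCast_nonneg k))
  obtain ⟨hb, hkc⟩ := Nat.mul_ne_zero_iff.1 (ha.trans_le h).ne'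
  calc Real.log a ≤ Real.log (b * k ^ c : ℕ) :=
        Real.log_le_log (by exact_mod_cast ha) (by exact_mod_cast h)
    _ = Real.log b + c * Real.log k := by
        push_cast
        rw [Real.log_mul (by exact_mod_cast hb) (by exact_mod_cast hkc), Real.log_pow]

theorem Filter.limsup_le_limsup_of_eventuallyLE_add {ι : Type*} {l : Filter ι} [l.NeBot]
    {f g e : ι → ℝ} (hfge : f ≤ᶠ[l] g + e) (he : Tendsto e l (𝓝 0))
    (hf : l.IsBoundedUnder (· ≥ ·) f) (hg_le : l.IsBoundedUnder (· ≤ ·) g)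
    (hg_ge : l.IsBoundedUnder (· ≥ ·) g) :
    limsup f l ≤ limsup g l :=
  calc limsup f l ≤ limsup (g + e) l :=
        limsup_le_limsup hfge hf.isCoboundedUnder_flip
          (isBoundedUnder_le_add hg_le he.isBoundedUnder_le)
    _ ≤ limsup g l + limsup e l :=
        limsup_add_le hg_ge hg_le he.isCoboundedUnder_le he.isBoundedUnder_le
    _ = limsup g l := by rw [he.limsup_eq, add_zero]

section Patterns

variable {S A : Type*}

theorem natCard_restrict_image_le_pow [Fintype A] (F : Finset S) (X : Set (S → A)) :
    Nat.card (F.restrict '' X) ≤ Fintype.card A ^ #F :=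
  calc Nat.card (F.restrict '' X) ≤ Nat.card (F → A) :=
        Nat.card_le_card_of_injective _ Subtype.val_injective
    _ = Fintype.card A ^ #F := by
        rw [Nat.card_fun, Nat.card_eq_fintype_card, Nat.card_eq_finsetCard]

theorem log_natCard_restrict_image_div_le [Fintype A] (F : Finset S) (X : Set (S → A)) :
    Real.log (Nat.card (F.restrict '' X)) / #F ≤ Real.log (Fintype.card A) := by
  refine div_le_of_le_mul₀ (Nat.cast_nonneg _) (Real.log_natCast_nonneg _) ?_
  have := Real.log_le_log_add_mul_log_of_le_mul_pow
    ((natCard_restrict_image_le_pow F X).trans_eq (one_mul _).symm)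
  rwa [Nat.cast_one, Real.log_one, zero_add, mul_comm] at this

theorem natCard_restrict_image_le_mul_pow [DecidableEq S] [Fintype A] {F Ω : Finset S}
    (hFΩ : F ⊆ Ω) (X : Set (S → A)) :
    Nat.card (Ω.restrict '' X) ≤ Nat.card (F.restrict '' X) * Fintype.card A ^ #(Ω \ F) := by
  have hmaps : Set.MapsTo (restrict₂ (π := fun _ => A) hFΩ) (Ω.restrict '' X)
      (F.restrict '' X) := by
    rintro _ ⟨x, hx, rfl⟩
    exact ⟨x, hx, rfl⟩
  let split : Ω.restrict '' X → F.restrict '' X × (↥(Ω \ F) → A) := fun y =>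
    (⟨restrict₂ (π := fun _ => A) hFΩ y.1, hmaps y.2⟩,
      restrict₂ (π := fun _ => A) sdiff_subset y.1)
  have hsplit : Function.Injective split := by
    rintro ⟨y, _⟩ ⟨z, _⟩ h
    ext ⟨s, hs⟩
    by_cases hsF : s ∈ F
    · exact congrFun (congrArg Subtype.val (congrArg Prod.fst h)) ⟨s, hsF⟩
    · exact congrFun (congrArg Prod.snd h) ⟨s, mem_sdiff.2 ⟨hs, hsF⟩⟩
  calc Nat.card (Ω.restrict '' X) ≤ Nat.card (F.restrict '' X × (↥(Ω \ F) → A)) :=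
        Nat.card_le_card_of_injective split hsplit
    _ = Nat.card (F.restrict '' X) * Fintype.card A ^ #(Ω \ F) := by
        rw [Nat.card_prod, Nat.card_fun, Nat.card_eq_finsetCard,
          Nat.card_eq_fintype_card (α := A)]

theorem natCard_restrict_image_image_le [Mul S] [Finite A] {M F Ω : Finset S}
    {μ : (M → A) → A} {τ : (S → A) → S → A} (hτ : ∀ x s, τ x s = μ fun m => x (↑m * s))
    (hΩ : ∀ m ∈ M, ∀ t ∈ F, m * t ∈ Ω) (X : Set (S → A)) :
    Nat.card (F.restrict '' (τ '' X)) ≤ Nat.card (Ω.restrict '' X) := by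
  have : F.restrict '' (τ '' X) =
      (fun (y : Ω → A) (t : F) => μ fun m => y ⟨↑m * ↑t, hΩ m m.2 t t.2⟩) ''
        (Ω.restrict '' X) := by
    simp only [Set.image_image]
    exact Set.image_congr fun x _ => funext fun t => hτ x t
  rw [this]
  exact Nat.card_image_le (Set.toFinite _)

end Patterns

section Folner

variable {S : Type*} [DecidableEq S] [Mul S]

theorem card_union_mul_sdiff_le (M F : Finset S) :
    #((F ∪ M * F) \ F) ≤ ∑ m ∈ M, #(F.image (m * ·) \ F) := by
  refine (card_le_card fun s hs => ?_).trans card_biUnion_le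
  obtain ⟨hs, hsF⟩ := mem_sdiff.1 hs
  obtain ⟨m, hm, t, ht, rfl⟩ := mem_mul.1 ((mem_union.1 hs).resolve_left hsF)
  exact mem_biUnion.2 ⟨m, hm, mem_sdiff.2 ⟨mem_image_of_mem _ ht, hsF⟩⟩

theorem tendsto_card_union_mul_sdiff_div {ι : Type*} {l : Filter ι} {F : ι → Finset S}
    (hF : ∀ s, Tendsto (fun i => (#((F i).image (s * ·) \ F i) : ℝ) / #(F i)) l (𝓝 0))
    (M : Finset S) :
    Tendsto (fun i => (#((F i ∪ M * F i) \ F i) : ℝ) / #(F i)) l (𝓝 0) := by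
  have hsum := tendsto_finsetSum M fun m _ => hF m
  rw [sum_const_zero] at hsum
  refine squeeze_zero (fun i => by positivity) (fun i => ?_) hsum
  rw [← sum_div]
  gcongr
  exact_mod_cast card_union_mul_sdiff_le M (F i)

end Folner

theorem entropy_image_le_general {S A J : Type*} [Semigroup S] [Fintype A] [DecidableEq S]
    [SemilatticeSup J] [Nonempty J]
    (F : J → Finset S)
    (hFol : ∀ s : S, Filter.Tendsto
      (fun j => ((((F j).image (fun t : S => s * t)) \ F j).card : ℝ) / (F j).card)
      Filter.atTop (nhds 0))
    (τ : (S → A) → (S → A))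
    (hτ : ∃ (M : Finset S) (μ : (M → A) → A),
      ∀ (x : S → A) (s : S), τ x s = μ (fun m => x (↑m * s)))
    (X : Set (S → A)) :
    ent F (τ '' X) ≤ ent F X := by
  obtain ⟨M, μ, hμ⟩ := hτ
  have hcount (j : J) : Nat.card ((F j).restrict '' (τ '' X)) ≤
      Nat.card ((F j).restrict '' X) * Fintype.card A ^ #((F j ∪ M * F j) \ F j) :=
    (natCard_restrict_image_image_le hμ (fun _ hm _ ht => mem_union_right _ (mul_mem_mul hm ht))
      X).trans (natCard_restrict_image_le_mul_pow subset_union_left X)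
  have hnonneg (Y : Set (S → A)) (j : J) :
      0 ≤ Real.log (Nat.card ((F j).restrict '' Y)) / #(F j) :=
    div_nonneg (Real.log_natCast_nonneg _) (Nat.cast_nonneg _)
  have herr := (tendsto_card_union_mul_sdiff_div hFol M).mul_const (Real.log (Fintype.card A))
  rw [zero_mul] at herr
  refine limsup_le_limsup_of_eventuallyLE_add (Eventually.of_forall fun j => ?_) herr
    (isBoundedUnder_of ⟨0, hnonneg _⟩)
    (isBoundedUnder_of ⟨_, fun j => log_natCard_restrict_image_div_le (F j) X⟩)
    (isBoundedUnder_of ⟨0, hnonneg X⟩)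
  calc _ ≤ (Real.log (Nat.card ((F j).restrict '' X)) +
          #((F j ∪ M * F j) \ F j) * Real.log (Fintype.card A)) / #(F j) :=
        div_le_div_of_nonneg_right (Real.log_le_log_add_mul_log_of_le_mul_pow (hcount j))
          (Nat.cast_nonneg _)
    _ = _ := by rw [add_div, mul_div_right_comm]; rfl

/-- Cellular automata over a left-cancellative semigroup with a Følner net do not
increase entropy: `ent F (τ(X)) ≤ ent F X`. -/
theorem entropy_image_le {S A J : Type*} [Semigroup S] [Fintype A] [DecidableEq S]
    [SemilatticeSup J] [Nonempty J]
    (hlc : ∀ s : S, Function.Injective (fun t : S => s * t))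
    (F : J → Finset S) (hFne : ∀ j, (F j).Nonempty)
    (hFol : ∀ s : S, Filter.Tendsto
      (fun j => ((((F j).image (fun t : S => s * t)) \ F j).card : ℝ) / (F j).card)
      Filter.atTop (nhds 0))
    (τ : (S → A) → (S → A))
    (hτ : ∃ (M : Finset S) (μ : (M → A) → A),
      ∀ (x : S → A) (s : S), τ x s = μ (fun m => x (↑m * s)))
    (X : Set (S → A)) :
    ent F (τ '' X) ≤ ent F X :=
  entropy_image_le_general F hFol τ hτ X
end

section
/- Let S be a left-cancellative left-amenable semigroup, F = (F_j)_{j∈J} a Følner net for S, and A a finite set with |A| ≥ 2. Suppose X ⊆ A^S is such that there exist a non-empty finite subset K ⊆ S and a K-tiling T of S with π_{Kt}(X) a proper subset of A^{Kt} for every t ∈ T. Then ent_F(X) < log|A|. -/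
/-!
Since the tiles `Kt` are pairwise disjoint and each misses a pattern, every tile lying inside a
window `E` costs a factor `(|A|^|K| - 1) / |A|^|K|` in the number of patterns seen on `E`. Each
point `s` lies next to a tile (`ks = k't`), and left cancellation shows that at most `|K|²` points
share a tile; all points of `E` except `O(Σ_k |kE \ E|)` many have their tile inside `E`. For a
Følner window the boundary term is negligible, so `E` contains at least `|E| / (2|K|²)` tiles, and
`log |π_E(X)| / |E|` stays a fixed amount below `log |A|`.
-/

open Finset Filter

noncomputable def patterns {S A : Type*} (X : Set (S → A)) (E : Finset S) : Set (E → A) :=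
  (fun x (u : E) => x u) '' X

section Patterns

variable {S A : Type*} [Fintype A] (X : Set (S → A))

lemma ncard_patterns_le_pow (E : Finset S) :
    (patterns X E).ncard ≤ Fintype.card A ^ E.card := by
  simpa [Nat.card_fun] using Set.ncard_le_card (patterns X E)

lemma ncard_patterns_lt_pow {D : Finset S} (h : patterns X D ≠ Set.univ) :
    (patterns X D).ncard < Fintype.card A ^ D.card := by
  simpa [Nat.card_fun] using Set.ncard_lt_card h

lemma ncard_patterns_mul_pow_le_of_ne_univ [Nonempty A] {D : Finset S} {n : ℕ}
    (hn : D.card ≤ n) (h : patterns X D ≠ Set.univ) :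
    (patterns X D).ncard * Fintype.card A ^ n ≤
      (Fintype.card A ^ n - 1) * Fintype.card A ^ D.card := by
  have hlt := ncard_patterns_lt_pow X h
  have hle : Fintype.card A ^ D.card ≤ Fintype.card A ^ n :=
    Nat.pow_le_pow_right Fintype.card_pos hn
  calc (patterns X D).ncard * Fintype.card A ^ n
      ≤ (Fintype.card A ^ D.card - 1) * Fintype.card A ^ n :=
        Nat.mul_le_mul_right _ (Nat.le_sub_one_of_lt hlt)
    _ ≤ (Fintype.card A ^ n - 1) * Fintype.card A ^ D.card := by
        rw [Nat.sub_one_mul, Nat.sub_one_mul, mul_comm]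
        exact Nat.sub_le_sub_left hle _

variable [DecidableEq S]

lemma ncard_patterns_le_mul {D E : Finset S} (hD : D ⊆ E) :
    (patterns X E).ncard ≤ (patterns X (E \ D)).ncard * (patterns X D).ncard := by
  rw [← Set.ncard_prod]
  refine Set.ncard_le_ncard_of_injOn
    (fun f => (fun u => f ⟨u, (mem_sdiff.1 u.2).1⟩, fun u => f ⟨u, hD u.2⟩)) ?_ ?_
  · rintro _ ⟨x, hx, rfl⟩
    exact ⟨⟨x, hx, rfl⟩, ⟨x, hx, rfl⟩⟩
  · intro f _ g _ hfg
    funext u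
    by_cases hu : (u : S) ∈ D
    · exact congrFun (Prod.ext_iff.1 hfg).2 ⟨u, hu⟩
    · exact congrFun (Prod.ext_iff.1 hfg).1 ⟨u, mem_sdiff.2 ⟨u.2, hu⟩⟩

theorem ncard_patterns_mul_pow_le [Nonempty A] {ι : Type*} (D : ι → Finset S) (n : ℕ)
    (I : Finset ι) {E : Finset S} (hdisj : (I : Set ι).PairwiseDisjoint D)
    (hsub : ∀ i ∈ I, D i ⊆ E) (hcard : ∀ i ∈ I, (D i).card ≤ n)
    (hmiss : ∀ i ∈ I, patterns X (D i) ≠ Set.univ) :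
    (patterns X E).ncard * (Fintype.card A ^ n) ^ I.card ≤
      (Fintype.card A ^ n - 1) ^ I.card * Fintype.card A ^ E.card := by
  classical
  induction I using Finset.induction_on generalizing E with
  | empty => simpa using ncard_patterns_le_pow X E
  | @insert i I hi ih =>
    have hrest : ∀ i' ∈ I, D i' ⊆ E \ D i := fun i' hi' =>
      subset_sdiff.2 ⟨hsub i' (mem_insert_of_mem hi'),
        hdisj (mem_insert_of_mem hi') (mem_insert_self i I) (ne_of_mem_of_not_mem hi' hi)⟩
    have ih' := ih (hdisj.subset (by simp)) hrest (fun i' hi' => hcard i' (mem_insert_of_mem hi'))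
      (fun i' hi' => hmiss i' (mem_insert_of_mem hi'))
    have htile := ncard_patterns_mul_pow_le_of_ne_univ X (hcard i (mem_insert_self i I))
      (hmiss i (mem_insert_self i I))
    have hDE := hsub i (mem_insert_self i I)
    rw [card_insert_of_notMem hi, ← card_sdiff_add_card_eq_card hDE]
    calc (patterns X E).ncard * (Fintype.card A ^ n) ^ (I.card + 1)
        ≤ (patterns X (E \ D i)).ncard * (patterns X (D i)).ncard *
            (Fintype.card A ^ n) ^ (I.card + 1) :=
          Nat.mul_le_mul_right _ (ncard_patterns_le_mul X hDE)
      _ = ((patterns X (E \ D i)).ncard * (Fintype.card A ^ n) ^ I.card) *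
            ((patterns X (D i)).ncard * Fintype.card A ^ n) := by ring
      _ ≤ ((Fintype.card A ^ n - 1) ^ I.card * Fintype.card A ^ (E \ D i).card) *
            ((Fintype.card A ^ n - 1) * Fintype.card A ^ (D i).card) :=
          Nat.mul_le_mul ih' htile
      _ = (Fintype.card A ^ n - 1) ^ (I.card + 1) *
            Fintype.card A ^ ((E \ D i).card + (D i).card) := by ring

end Patterns

section Boundary

variable {S : Type*} [Mul S] [DecidableEq S]

def leftBoundaryCard (K E : Finset S) : ℕ := ∑ k ∈ K, (E.image (k * ·) \ E).card

def leftInterior (K E : Finset S) : Finset S := E.filter fun s => ∀ k ∈ K, k * s ∈ E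

lemma eventually_mul_leftBoundaryCard_le {J : Type*} {l : Filter J} (F : J → Finset S)
    (hFne : ∀ j, (F j).Nonempty)
    (hFol : ∀ s : S, Tendsto
      (fun j => ((((F j).image (fun t : S => s * t)) \ F j).card : ℝ) / (F j).card) l (nhds 0))
    (K : Finset S) (C : ℝ) :
    ∀ᶠ j in l, C * leftBoundaryCard K (F j) ≤ (F j).card := by
  have hlim : Tendsto (fun j => C * ((leftBoundaryCard K (F j) : ℝ) / (F j).card)) l (nhds 0) := by
    simpa [leftBoundaryCard, sum_div] using (tendsto_finsetSum K fun k _ => hFol k).const_mul C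
  filter_upwards [hlim.eventually_lt_const one_pos] with j hj
  rw [← mul_div_assoc, div_lt_one (by exact_mod_cast (hFne j).card_pos)] at hj
  exact hj.le

variable [IsLeftCancelMul S]

lemma card_filter_mul_mem_le (E Y : Finset S) (k : S) :
    (E.filter fun s => k * s ∈ Y).card ≤ Y.card :=
  card_le_card_of_injOn (k * ·) (fun _ hs => (mem_filter.1 hs).2) (mul_right_injective k).injOn

lemma card_sdiff_leftInterior_le (K E : Finset S) :
    (E \ leftInterior K E).card ≤ leftBoundaryCard K E := by
  calc (E \ leftInterior K E).card
      ≤ (K.biUnion fun k => E.filter fun s => k * s ∈ E.image (k * ·) \ E).card := by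
        refine card_le_card fun s (hs : s ∈ E \ leftInterior K E) => ?_
        rw [Finset.mem_sdiff, leftInterior, mem_filter] at hs
        obtain ⟨k, hk, hks⟩ := not_forall₂.1 (hs.2 ∘ And.intro hs.1)
        exact mem_biUnion.2 ⟨k, hk, mem_filter.2 ⟨hs.1, mem_sdiff.2 ⟨mem_image_of_mem _ hs.1, hks⟩⟩⟩
    _ ≤ ∑ k ∈ K, (E.filter fun s => k * s ∈ E.image (k * ·) \ E).card := card_biUnion_le
    _ ≤ leftBoundaryCard K E := sum_le_sum fun k _ => card_filter_mul_mem_le _ _ k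

variable {K : Finset S} {τ κ κ' : S → S}

lemma card_le_sq_mul_card_image (hκ : ∀ s, κ s ∈ K) (hκ' : ∀ s, κ' s ∈ K)
    (h : ∀ s, κ s * s = κ' s * τ s) (G : Finset S) :
    G.card ≤ K.card ^ 2 * (G.image τ).card := by
  refine card_le_mul_card_image G _ fun t _ => ?_
  rw [sq, ← card_product]
  refine card_le_card_of_injOn (fun s => (κ s, κ' s)) (fun s _ => mem_product.2 ⟨hκ s, hκ' s⟩) ?_
  intro s₁ h₁ s₂ h₂ hκκ'
  rw [mem_coe, mem_filter] at h₁ h₂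
  rw [Prod.mk.injEq] at hκκ'
  apply mul_right_injective (κ s₁)
  dsimp only
  rw [h s₁, hκκ'.1, hκκ'.2, h₁.2, ← h₂.2, ← h s₂]


lemma card_filter_not_image_subset_le (hκ : ∀ s, κ s ∈ K) (hκ' : ∀ s, κ' s ∈ K)
    (h : ∀ s, κ s * s = κ' s * τ s) (E : Finset S) :
    (E.filter fun s => ¬K.image (· * τ s) ⊆ E).card ≤
      (1 + K.card * (K.card + 1)) * leftBoundaryCard K E := by
  set Y := K.biUnion fun k => (E \ leftInterior K E).image (k * ·) ∪ (E \ E.image (k * ·))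
  have hY : Y.card ≤ (K.card + 1) * leftBoundaryCard K E := by
    calc Y.card ≤ ∑ k ∈ K, ((E \ leftInterior K E).card + (E.image (k * ·) \ E).card) := by
          refine card_biUnion_le.trans (sum_le_sum fun k _ => (card_union_le _ _).trans ?_)
          rw [card_sdiff_comm (card_image_of_injective E (mul_right_injective k)).symm]
          exact Nat.add_le_add_right card_image_le _
      _ ≤ (K.card + 1) * leftBoundaryCard K E := by
          rw [sum_add_distrib, sum_const, smul_eq_mul, add_one_mul]
          exact Nat.add_le_add_right
            (Nat.mul_le_mul_left _ (card_sdiff_leftInterior_le K E)) _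
  -- A point whose tile leaves `E` is either near the boundary itself, or is sent into `Y` by `κ s`.
  have hsub : (E.filter fun s => ¬K.image (· * τ s) ⊆ E) ⊆
      (E \ leftInterior K E) ∪ K.biUnion fun k => E.filter fun s => k * s ∈ Y := by
    intro s hs
    rw [mem_filter] at hs
    by_cases hint : s ∈ leftInterior K E
    · refine mem_union_right _ (mem_biUnion.2 ⟨κ s, hκ s, mem_filter.2 ⟨hs.1, ?_⟩⟩)
      have hκs : κ s * s ∈ E := (mem_filter.1 hint).2 _ (hκ s)
      refine mem_biUnion.2 ⟨κ' s, hκ' s, ?_⟩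
      rw [h s]
      by_cases hτ : τ s ∈ E
      · refine mem_union_left _ (mem_image_of_mem _ (Finset.mem_sdiff.2 ⟨hτ, fun hτint => hs.2 ?_⟩))
        exact image_subset_iff.2 (mem_filter.1 hτint).2
      · refine mem_union_right _ (Finset.mem_sdiff.2 ⟨h s ▸ hκs, fun hmem => hτ ?_⟩)
        obtain ⟨z, hz, hzτ⟩ := mem_image.1 hmem
        rwa [← mul_right_injective (κ' s) hzτ]
    · exact mem_union_left _ (Finset.mem_sdiff.2 ⟨hs.1, hint⟩)
  calc (E.filter fun s => ¬K.image (· * τ s) ⊆ E).card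
      ≤ (E \ leftInterior K E).card + ∑ k ∈ K, (E.filter fun s => k * s ∈ Y).card :=
        (card_le_card hsub).trans ((card_union_le _ _).trans (Nat.add_le_add_left card_biUnion_le _))
    _ ≤ leftBoundaryCard K E + K.card * ((K.card + 1) * leftBoundaryCard K E) := by
        refine Nat.add_le_add (card_sdiff_leftInterior_le K E) ?_
        rw [← smul_eq_mul, ← sum_const]
        exact sum_le_sum fun k _ => (card_filter_mul_mem_le E Y k).trans hY
    _ = (1 + K.card * (K.card + 1)) * leftBoundaryCard K E := by ring

theorem exists_tiles_card_le {T : Set S} (hT : ∀ s, ∃ t ∈ T, ∃ k ∈ K, ∃ k' ∈ K, k * s = k' * t)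
    (E : Finset S) :
    ∃ 𝒯 : Finset S, ↑𝒯 ⊆ T ∧ (∀ t ∈ 𝒯, K.image (· * t) ⊆ E) ∧
      E.card ≤ K.card ^ 2 * 𝒯.card + (1 + K.card * (K.card + 1)) * leftBoundaryCard K E := by
  choose τ hτ κ hκ κ' hκ' h using hT
  refine ⟨(E.filter fun s => K.image (· * τ s) ⊆ E).image τ, ?_, ?_, ?_⟩
  · intro t ht
    obtain ⟨s, -, rfl⟩ := mem_image.1 ht
    exact hτ s
  · intro t ht
    obtain ⟨s, hs, rfl⟩ := mem_image.1 ht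
    exact (mem_filter.1 hs).2
  · rw [← card_filter_add_card_filter_not (fun s => K.image (· * τ s) ⊆ E)]
    exact Nat.add_le_add (card_le_sq_mul_card_image hκ hκ' h _)
      (card_filter_not_image_subset_le hκ hκ' h E)

end Boundary

/-- Each tile saves `log (q / (q - 1))` with `q = a ^ n`, and a Følner window of size `|E|` holds
at least `|E| / (2 n²)` tiles. -/
noncomputable def tilingGap (a n : ℕ) : ℝ :=
  (Real.log ((a : ℝ) ^ n) - Real.log ((a : ℝ) ^ n - 1)) / (2 * n ^ 2)

section TilingGap

variable {a n : ℕ}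

lemma two_le_natCast_pow (ha : 2 ≤ a) (hn : 0 < n) : (2 : ℝ) ≤ (a : ℝ) ^ n :=
  (by exact_mod_cast ha : (2 : ℝ) ≤ a).trans
    (le_self_pow₀ (by exact_mod_cast (by omega : 1 ≤ a)) hn.ne')

lemma tilingGap_pos (ha : 2 ≤ a) (hn : 0 < n) : 0 < tilingGap a n := by
  have := two_le_natCast_pow ha hn
  exact div_pos (sub_pos.2 (Real.log_lt_log (by linarith) (by linarith))) (by positivity)

lemma tilingGap_le_log (ha : 2 ≤ a) (hn : 0 < n) : tilingGap a n ≤ Real.log a := by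
  have hlog : 0 ≤ Real.log ((a : ℝ) ^ n - 1) := Real.log_nonneg (by linarith [two_le_natCast_pow ha hn])
  have hloga : 0 ≤ Real.log a := Real.log_natCast_nonneg a
  have hn1 : (1 : ℝ) ≤ n := by exact_mod_cast hn
  have hn2 : (n : ℝ) ≤ 2 * n ^ 2 := by nlinarith
  rw [tilingGap, div_le_iff₀ (by positivity), Real.log_pow]
  nlinarith [mul_le_mul_of_nonneg_right hn2 hloga]

end TilingGap

lemma ent_le_of_eventually_le {S A J : Type*} [Preorder J] [IsDirectedOrder J] [Nonempty J]
    {F : J → Finset S} {X : Set (S → A)} {b : ℝ}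
    (h : ∀ᶠ j in atTop, Real.log (patterns X (F j)).ncard / (F j).card ≤ b) : ent F X ≤ b :=
  limsup_le_of_le (isCoboundedUnder_le_of_le atTop fun _ =>
    div_nonneg (Real.log_natCast_nonneg _) (Nat.cast_nonneg _)) h

lemma log_add_mul_log_le_of_mul_pow_le {a n N P e : ℕ} (ha : 2 ≤ a) (hn : 0 < n) (hP : 0 < P)
    (h : P * (a ^ n) ^ N ≤ (a ^ n - 1) ^ N * a ^ e) :
    Real.log P + N * (Real.log ((a : ℝ) ^ n) - Real.log ((a : ℝ) ^ n - 1)) ≤ e * Real.log a := by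
  have hq := two_le_natCast_pow ha hn
  have hcast : (P : ℝ) * ((a : ℝ) ^ n) ^ N ≤ ((a : ℝ) ^ n - 1) ^ N * (a : ℝ) ^ e := by
    -- lets `exact_mod_cast` cast the truncated subtraction `a ^ n - 1`
    have h1 : 1 ≤ a ^ n := Nat.one_le_pow _ _ (by omega)
    exact_mod_cast h
  have := Real.log_le_log (by positivity) hcast
  rw [Real.log_mul (by positivity) (by positivity),
    Real.log_mul (pow_pos (by linarith) _).ne' (by positivity)] at this
  simp only [Real.log_pow] at this ⊢
  linarith

theorem log_ncard_patterns_div_card_le {S A : Type*} [Mul S] [IsLeftCancelMul S]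
    [DecidableEq S] [Fintype A] (hA : 2 ≤ Fintype.card A) {X : Set (S → A)} {K : Finset S}
    (hK : K.Nonempty) {T : Set S} (hdisj : T.PairwiseDisjoint fun t => K.image (· * t))
    (hcover : ∀ s, ∃ t ∈ T, ∃ k ∈ K, ∃ k' ∈ K, k * s = k' * t)
    (hX : ∀ t ∈ T, patterns X (K.image (· * t)) ≠ Set.univ) {E : Finset S}
    (hE : 2 * ((1 + K.card * (K.card + 1) : ℕ) : ℝ) * leftBoundaryCard K E ≤ E.card) :
    Real.log (patterns X E).ncard / E.card ≤
      Real.log (Fintype.card A) - tilingGap (Fintype.card A) K.card := by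
  have : Nonempty A := Fintype.card_pos_iff.1 (by omega)
  have hgap_le := tilingGap_le_log hA hK.card_pos
  refine div_le_of_le_mul₀ (Nat.cast_nonneg _) (sub_nonneg.2 hgap_le) ?_
  obtain ⟨𝒯, h𝒯T, h𝒯E, hE𝒯⟩ := exists_tiles_card_le hcover E
  have hmany : (E.card : ℝ) ≤ 2 * K.card ^ 2 * 𝒯.card := by
    have : (E.card : ℝ) ≤ K.card ^ 2 * 𝒯.card +
        ((1 + K.card * (K.card + 1) : ℕ) : ℝ) * leftBoundaryCard K E := by exact_mod_cast hE𝒯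
    linarith
  rcases (patterns X E).ncard.eq_zero_or_pos with h0 | hpos
  · rw [h0, Nat.cast_zero, Real.log_zero]
    exact mul_nonneg (sub_nonneg.2 hgap_le) (Nat.cast_nonneg _)
  have hcount := ncard_patterns_mul_pow_le X (fun t => K.image (· * t)) K.card 𝒯
    (hdisj.subset h𝒯T) h𝒯E (fun _ _ => card_image_le) (fun t ht => hX t (h𝒯T ht))
  have hlog := log_add_mul_log_le_of_mul_pow_le hA hK.card_pos hpos hcount
  have hgap : (E.card : ℝ) * tilingGap (Fintype.card A) K.card ≤
      𝒯.card * (Real.log ((Fintype.card A : ℝ) ^ K.card) -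
        Real.log ((Fintype.card A : ℝ) ^ K.card - 1)) := by
    calc (E.card : ℝ) * tilingGap (Fintype.card A) K.card
        ≤ 2 * K.card ^ 2 * 𝒯.card * tilingGap (Fintype.card A) K.card :=
          mul_le_mul_of_nonneg_right hmany (tilingGap_pos hA hK.card_pos).le
      _ = _ := by
          have : (K.card : ℝ) ≠ 0 := by exact_mod_cast hK.card_pos.ne'
          rw [tilingGap]
          field_simp
  linarith

/-- If `X ⊆ A^S` (with `|A| ≥ 2`) misses a pattern on every tile `Kt` of a `K`-tiling
`T`, then `ent F X < log |A|`. -/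
theorem entropy_lt_of_tiling {S A J : Type*} [Semigroup S] [Fintype A] [DecidableEq S]
    [SemilatticeSup J] [Nonempty J]
    (hlc : ∀ s : S, Function.Injective (fun t : S => s * t))
    (F : J → Finset S) (hFne : ∀ j, (F j).Nonempty)
    (hFol : ∀ s : S, Filter.Tendsto
      (fun j => ((((F j).image (fun t : S => s * t)) \ F j).card : ℝ) / (F j).card)
      Filter.atTop (nhds 0))
    (hA : 2 ≤ Fintype.card A)
    (X : Set (S → A)) (K : Finset S) (hK : K.Nonempty) (T : Set S)
    (hT1 : ∀ t₁ ∈ T, ∀ t₂ ∈ T, t₁ ≠ t₂ →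
      Disjoint ((fun k : S => k * t₁) '' (K : Set S)) ((fun k : S => k * t₂) '' (K : Set S)))
    (hT2 : ∀ s : S, ∃ t ∈ T,
      (((fun k : S => k * s) '' (K : Set S)) ∩ ((fun k : S => k * t) '' (K : Set S))).Nonempty)
    (hX : ∀ t ∈ T,
      (fun (x : S → A) (u : (K.image (fun k : S => k * t) : Finset S)) => x ↑u) '' X ≠
        Set.univ) :
    ent F X < Real.log (Fintype.card A) := by
  have : IsLeftCancelMul S := ⟨fun s _ _ h => hlc s h⟩
  have hdisj : T.PairwiseDisjoint fun t => K.image (· * t) := fun t₁ h₁ t₂ h₂ hne => by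
    simpa [Function.onFun, ← disjoint_coe] using hT1 t₁ h₁ t₂ h₂ hne
  have hcover : ∀ s, ∃ t ∈ T, ∃ k ∈ K, ∃ k' ∈ K, k * s = k' * t := fun s => by
    obtain ⟨t, ht, -, ⟨k, hk, rfl⟩, k', hk', h⟩ := hT2 s
    exact ⟨t, ht, k, hk, k', hk', h.symm⟩
  calc ent F X ≤ Real.log (Fintype.card A) - tilingGap (Fintype.card A) K.card :=
        ent_le_of_eventually_le <| (eventually_mul_leftBoundaryCard_le F hFne hFol K _).mono
          fun _ hE => log_ncard_patterns_div_card_le hA hK hdisj hcover hX hE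
    _ < Real.log (Fintype.card A) := sub_lt_self _ (tilingGap_pos hA hK.card_pos)
end

section
/- Let S be a left-cancellative left-amenable semigroup, F = (F_j)_{j∈J} a Følner net for S, and A a finite set. If τ : A^S → A^S is a cellular automaton whose image satisfies ent_F(τ(A^S)) < log|A|, then τ is not pre-injective, i.e., there exist two distinct almost equal configurations x₁, x₂ ∈ A^S with τ(x₁) = τ(x₂). -/
/-- If a cellular automaton over a left-cancellative semigroup with a Følner net has
image of non-maximal entropy, then it is not pre-injective: there exist two distinct
almost equal configurations with the same image. -/
theorem not_preinjective_of_entropy_lt {S A J : Type*} [Semigroup S] [Fintype A]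
    [SemilatticeSup J] [Nonempty J] [DecidableEq S]
    (hlc : ∀ s : S, Function.Injective (fun t : S => s * t))
    (F : J → Finset S) (hFne : ∀ j, (F j).Nonempty)
    (hFol : ∀ s : S, Filter.Tendsto
      (fun j => ((((F j).image (fun t : S => s * t)) \ F j).card : ℝ) / (F j).card)
      Filter.atTop (nhds 0))
    (τ : (S → A) → (S → A))
    (hτ : ∃ (M : Finset S) (μ : (M → A) → A),
      ∀ (x : S → A) (s : S), τ x s = μ (fun m => x (↑m * s)))
    (hent : ent F (Set.range τ) < Real.log (Fintype.card A)) :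
    ∃ x₁ x₂ : S → A, x₁ ≠ x₂ ∧ (∃ Φ : Finset S, ∀ s ∉ Φ, x₁ s = x₂ s) ∧ τ x₁ = τ x₂ := by
  classical
  by_contra hcon
  push_neg at hcon
  have hpre : ∀ x₁ x₂ : S → A, (∃ Φ : Finset S, ∀ s ∉ Φ, x₁ s = x₂ s) → τ x₁ = τ x₂ →
      x₁ = x₂ := by
    intro x₁ x₂ h1 h2
    by_contra hne
    exact hcon x₁ x₂ hne h1 h2
  obtain ⟨M, μ, hμ⟩ := hτ
  set a : ℕ := Fintype.card A with ha
  -- the set of projections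
  set P := fun j : J => (fun (x : S → A) (t : F j) => x ↑t) '' (Set.range τ) with hP
  have hFpos : ∀ j, (0:ℝ) < (F j).card := by
    intro j
    exact_mod_cast (hFne j).card_pos
  have hupper : ∀ j, Nat.card (P j) ≤ a ^ (F j).card := by
    intro j
    calc Nat.card (P j) ≤ Nat.card ({x // x ∈ F j} → A) :=
          Nat.card_le_card_of_injective Subtype.val Subtype.val_injective
      _ = a ^ (F j).card := by
          rw [Nat.card_eq_fintype_card, Fintype.card_fun, Fintype.card_coe]
  rcases le_or_gt a 1 with hA | hA
  · -- degenerate case: at most one letter, all entropy terms are 0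
    have hterm : ∀ j, Real.log (Nat.card (P j)) / (F j).card = 0 := by
      intro j
      have h1 : Nat.card (P j) ≤ 1 := le_trans (hupper j)
        ((Nat.pow_le_pow_left hA _).trans (by simp))
      rcases Nat.le_one_iff_eq_zero_or_eq_one.mp h1 with h | h <;> rw [h] <;>
        simp only [Nat.cast_zero, Nat.cast_one, Real.log_zero, Real.log_one, zero_div]
    have hent0 : ent F (Set.range τ) = 0 := by
      unfold ent
      have : (fun j => Real.log (Nat.card
          ((fun (x : S → A) (t : F j) => x ↑t) '' (Set.range τ))) / (F j).card)
          = fun _ : J => (0:ℝ) := funext fun j => hterm j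
      rw [this, Filter.limsup_const]
    have hloga : Real.log a ≤ 0 := Real.log_nonpos (by positivity) (by exact_mod_cast hA)
    rw [hent0] at hent
    linarith
  -- main case: at least two letters
  have hlog : (0:ℝ) < Real.log a := Real.log_pos (by exact_mod_cast hA)
  have : Nonempty A := Fintype.card_pos_iff.mp (by omega)
  obtain ⟨a₀⟩ := this
  set z : S → A := fun _ => a₀ with hz
  -- the M-interior of F j
  set Ω : J → Finset S := fun j =>
    F j \ M.biUnion (fun m => F j \ (F j).image (fun t => m * t)) with hΩ
  have hΩsub : ∀ j, Ω j ⊆ F j := fun j => Finset.sdiff_subset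
  have hkey : ∀ (j : J) (m : S), m ∈ M → ∀ s : S, s ∉ F j → m * s ∉ Ω j := by
    intro j m hm s hs hmem
    rw [hΩ] at hmem
    simp only [Finset.mem_sdiff, Finset.mem_biUnion] at hmem
    obtain ⟨hF, hnb⟩ := hmem
    push_neg at hnb
    obtain ⟨t, ht, hts⟩ := Finset.mem_image.mp (hnb m hm hF)
    exact hs ((hlc m hts) ▸ ht)
  -- counting: pre-injectivity forces many patterns in the projections
  have hcount : ∀ j, a ^ (Ω j).card ≤ Nat.card (P j) := by
    intro j
    let X : ({x // x ∈ Ω j} → A) → (S → A) :=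
      fun u s => if h : s ∈ Ω j then u ⟨s, h⟩ else z s
    have hXeq : ∀ u v : {x // x ∈ Ω j} → A, τ (X u) = τ (X v) → u = v := by
      intro u v huv
      have hx : X u = X v := by
        refine hpre (X u) (X v) ⟨Ω j, fun s hs => ?_⟩ huv
        simp only [X, dif_neg hs]
      funext t
      have h := congrFun hx (t : S)
      simpa only [X, dif_pos t.2] using h
    let Ψ : ({x // x ∈ Ω j} → A) → (P j) :=
      fun u => ⟨fun t => τ (X u) ↑t, ⟨τ (X u), ⟨X u, rfl⟩, rfl⟩⟩
    have hΨinj : Function.Injective Ψ := by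
      intro u v h
      apply hXeq
      funext s
      by_cases hs : s ∈ F j
      · exact congrFun (congrArg Subtype.val h) ⟨s, hs⟩
      · rw [hμ, hμ]
        congr 1
        funext m
        have hm : (m : S) * s ∉ Ω j := hkey j m m.2 s hs
        simp only [X, dif_neg hm]
    calc a ^ (Ω j).card = Nat.card ({x // x ∈ Ω j} → A) := by
          rw [Nat.card_eq_fintype_card, Fintype.card_fun, Fintype.card_coe]
      _ ≤ Nat.card (P j) := Nat.card_le_card_of_injective Ψ hΨinj
  -- Følner: the boundary is small
  set ε : J → ℝ := fun j =>
    ∑ m ∈ M, ((((F j).image (fun t => m * t)) \ F j).card : ℝ) / (F j).card with hε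
  have hεlim : Filter.Tendsto ε Filter.atTop (nhds 0) := by
    have h := tendsto_finset_sum (f := fun (m : S) (j : J) =>
      ((((F j).image (fun t => m * t)) \ F j).card : ℝ) / (F j).card) M
      (fun m _ => hFol m)
    simpa using h
  have hsdiff : ∀ j, ((F j \ Ω j).card : ℝ) ≤ ε j * (F j).card := by
    intro j
    have h1 : F j \ Ω j ⊆ M.biUnion (fun m => F j \ (F j).image (fun t => m * t)) := by
      intro x hx
      rw [Finset.mem_sdiff] at hx
      obtain ⟨hx1, hx2⟩ := hx
      rw [hΩ, Finset.mem_sdiff] at hx2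
      push_neg at hx2
      exact hx2 hx1
    have h2 : (F j \ Ω j).card ≤
        ∑ m ∈ M, (F j \ (F j).image (fun t => m * t)).card :=
      le_trans (Finset.card_le_card h1) (Finset.card_biUnion_le)
    have h3 : ∀ m : S, (F j \ (F j).image (fun t => m * t)).card =
        (((F j).image (fun t => m * t)) \ F j).card := by
      intro m
      exact Finset.card_sdiff_comm
        (by rw [Finset.card_image_of_injective _ (hlc m)])
    calc ((F j \ Ω j).card : ℝ)
        ≤ ∑ m ∈ M, ((((F j).image (fun t => m * t)) \ F j).card : ℝ) := by
          push_cast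
          exact_mod_cast h2.trans_eq (Finset.sum_congr rfl (fun m _ => h3 m))
      _ = ε j * (F j).card := by
          rw [hε, Finset.sum_mul]
          exact Finset.sum_congr rfl (fun m _ => by
            field_simp)
  -- the entropy terms
  set g : J → ℝ := fun j => Real.log (Nat.card (P j)) / (F j).card with hg
  have hub : ∀ j, g j ≤ Real.log a := by
    intro j
    rw [hg, div_le_iff₀ (hFpos j)]
    have hcardpos : (0:ℝ) < (a:ℝ) ^ (F j).card := by positivity
    calc Real.log (Nat.card (P j)) ≤ Real.log ((a:ℝ) ^ (F j).card) := by
          rcases Nat.eq_zero_or_pos (Nat.card (P j)) with h | h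
          · rw [h]
            simp only [Nat.cast_zero, Real.log_zero]
            rw [Real.log_pow]
            positivity
          · apply Real.log_le_log (by exact_mod_cast h)
            exact_mod_cast hupper j
      _ = (F j).card * Real.log a := by rw [Real.log_pow]
      _ = Real.log a * (F j).card := mul_comm _ _

  have hlb : ∀ j, (1 - ε j) * Real.log a ≤ g j := by
    intro j
    rw [hg, le_div_iff₀ (hFpos j)]
    have h1 : ((Ω j).card : ℝ) * Real.log a ≤ Real.log (Nat.card (P j)) := by
      have := hcount j
      calc ((Ω j).card : ℝ) * Real.log a = Real.log ((a:ℝ) ^ (Ω j).card) := by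
            rw [Real.log_pow]
        _ ≤ Real.log (Nat.card (P j)) := by
            apply Real.log_le_log (by positivity)
            exact_mod_cast this
    have h2 : (1 - ε j) * (F j).card ≤ ((Ω j).card : ℝ) := by
      have hc : ((Ω j).card : ℝ) = (F j).card - ((F j \ Ω j).card : ℝ) := by
        have := Finset.card_sdiff_add_card_eq_card (hΩsub j)
        push_cast [← this]
        ring
      have := hsdiff j
      rw [hc]
      nlinarith [hFpos j]
    calc (1 - ε j) * Real.log a * (F j).card
        = ((1 - ε j) * (F j).card) * Real.log a := by ring
      _ ≤ ((Ω j).card : ℝ) * Real.log a :=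
          mul_le_mul_of_nonneg_right h2 hlog.le
      _ ≤ Real.log (Nat.card (P j)) := h1
  have hLlim : Filter.Tendsto (fun j => (1 - ε j) * Real.log a)
      Filter.atTop (nhds (Real.log a)) := by
    have h := ((tendsto_const_nhds (x := (1:ℝ))).sub hεlim).mul_const (Real.log a)
    simpa using h
  have hglim : Filter.Tendsto g Filter.atTop (nhds (Real.log a)) :=
    tendsto_of_tendsto_of_tendsto_of_le_of_le hLlim tendsto_const_nhds hlb hub
  have hlimsup : Filter.limsup g Filter.atTop = Real.log a := hglim.limsup_eq
  have hent' : ent F (Set.range τ) = Real.log a := by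
    unfold ent
    exact hlimsup
  rw [hent'] at hent
  exact lt_irrefl _ hent
end

section
/- (Myhill property for cancellative left-amenable semigroups) Let S be a cancellative left-amenable semigroup and A a finite set. Then every pre-injective cellular automaton τ : A^S → A^S is surjective. In particular, every injective cellular automaton over S with finite alphabet is surjective. -/
/-!
If `y` is not in the image of `τ`, compactness of `A^S` yields a finite window `Ω` on which no
configuration of the image agrees with `y`; the same then holds on every right translate `Ω t`.
Take a Følner set `F` and a maximal family of pairwise disjoint translates `Ω t` with `t ∈ F`;
there are at least `|F| / |Ω|²` of them. Extending patterns on `F` by a constant and applying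
`τ` is injective by pre-injectivity, the result is determined by its values on a thickening
`E ⊇ F` with `|E| / |F|` close to `1`, and on each of the disjoint translates one of the
`|A|^|Ω|` patterns is excluded. Hence `|A|^|F| ≤ (1 - |A|^(-|Ω|))^(|F| / |Ω|²) |A|^|E|`,
which is impossible once `|E| / |F|` is close enough to `1`.
-/

open Finset Function

theorem exists_finset_forall_exists_ne_of_notMem_range {X ι A : Type*} [TopologicalSpace X]
    [CompactSpace X] [TopologicalSpace A] [T2Space A] {f : X → ι → A} (hf : Continuous f)
    {y : ι → A} (hy : y ∉ Set.range f) : ∃ Ω : Finset ι, ∀ x, ∃ i ∈ Ω, f x i ≠ y i := by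
  obtain ⟨Ω, u, hu, hΩ⟩ :=
    isOpen_pi_iff.1 (isCompact_range hf).isClosed.isOpen_compl y hy
  refine ⟨Ω, fun x => ?_⟩
  by_contra! h
  exact hΩ (fun i hi => h i hi ▸ (hu i hi).2) ⟨x, rfl⟩

theorem Finset.card_preimage_sdiff_le {α : Type*} [DecidableEq α] {f : α → α} (hf : Injective f)
    (F : Finset α) : #(F.preimage f hf.injOn \ F) ≤ #(F.image f \ F) :=
  calc #(F.preimage f hf.injOn \ F) ≤ #(F \ F.image f) := by
        refine card_le_card_of_injOn f (fun t ht => ?_) hf.injOn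
        simp only [coe_sdiff, Set.mem_sdiff, mem_coe, mem_preimage, mem_image, hf.eq_iff,
          exists_eq_right] at ht ⊢
        exact ht
    _ = #(F.image f \ F) := card_sdiff_comm (card_image_of_injective F hf).symm

theorem Finset.exists_pairwiseDisjoint_subset_card_le_mul {ι α : Type*} [DecidableEq α]
    (blk : ι → Finset α) (T : Finset ι) (w : ℕ) (hne : ∀ t ∈ T, (blk t).Nonempty)
    (hdeg : ∀ t ∈ T, #{s ∈ T | ¬Disjoint (blk s) (blk t)} ≤ w) :
    ∃ D ⊆ T, (D : Set ι).PairwiseDisjoint blk ∧ #T ≤ #D * w := by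
  classical
  obtain ⟨D, hD, hmax⟩ := exists_max_image
    (T.powerset.filter fun D : Finset ι => (D : Set ι).PairwiseDisjoint blk) card ⟨∅, by simp⟩
  rw [mem_filter, mem_powerset] at hD
  refine ⟨D, hD.1, hD.2, ?_⟩
  have hcover : T ⊆ D.biUnion fun d => {s ∈ T | ¬Disjoint (blk s) (blk d)} := by
    intro t ht
    simp only [mem_biUnion, mem_filter]
    by_contra! h
    have htD : t ∉ D := fun htD => (hne t ht).ne_empty (disjoint_self.1 (h t htD ht))
    have := hmax (insert t D) <| by
      simp only [mem_filter, mem_powerset, coe_insert]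
      exact ⟨insert_subset ht hD.1, hD.2.insert fun d hd _ => (h d hd ht)⟩
    rw [card_insert_of_notMem htD] at this
    omega
  calc #T ≤ ∑ d ∈ D, #{s ∈ T | ¬Disjoint (blk s) (blk d)} :=
        (card_le_card hcover).trans card_biUnion_le
    _ ≤ ∑ _d ∈ D, w := sum_le_sum fun d hd => hdeg d (hD.1 hd)
    _ = #D * w := by rw [sum_const, smul_eq_mul]

theorem pow_le_mul_pow_of_mul_pow_le {q r s N F E n c w : ℕ} (hq : 0 < q) (hN : N ≠ 0)
    (hcount : q ^ F * r ^ N ≤ s ^ N * q ^ E) (hE : n * E ≤ (n + c) * F) (hF : F ≤ N * w) :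
    r ^ n ≤ s ^ n * q ^ (c * w) := by
  have key : q ^ (n * F) * (r ^ n) ^ N ≤ q ^ (n * F) * (s ^ n * q ^ (c * w)) ^ N :=
    calc q ^ (n * F) * (r ^ n) ^ N = (q ^ F * r ^ N) ^ n := by ring
      _ ≤ (s ^ N * q ^ E) ^ n := by gcongr
      _ = (s ^ n) ^ N * q ^ (n * E) := by ring
      _ ≤ (s ^ n) ^ N * q ^ ((n + c) * F) := by gcongr
      _ ≤ (s ^ n) ^ N * q ^ (n * F + c * (N * w)) := by gcongr; nlinarith
      _ = q ^ (n * F) * (s ^ n * q ^ (c * w)) ^ N := by ring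
  exact (Nat.pow_le_pow_iff_left hN).1 (Nat.le_of_mul_le_mul_left key (by positivity))

theorem exists_mul_pow_lt_succ_pow (K s : ℕ) : ∃ n, 0 < n ∧ K * s ^ n < (s + 1) ^ n := by
  obtain ⟨n, hn⟩ := exists_pow_lt_of_lt_one (by positivity : (0 : ℝ) < 1 / (K + 1))
    ((div_lt_one (by positivity)).2 (lt_add_one (s : ℝ)))
  refine ⟨n + 1, n.succ_pos, ?_⟩
  have hlt : ((s : ℝ) / (s + 1)) ^ (n + 1) < 1 / (K + 1) :=
    (pow_le_pow_of_le_one (by positivity) (div_le_one_of_le₀ (by linarith) (by positivity))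
      n.le_succ).trans_lt hn
  rw [div_pow, div_lt_div_iff₀ (by positivity) (by positivity)] at hlt
  have : (K : ℝ) * s ^ (n + 1) < (s + 1) ^ (n + 1) := by
    nlinarith [pow_nonneg (Nat.cast_nonneg (α := ℝ) s) (n + 1)]
  exact_mod_cast this

theorem card_mul_pow_le_of_forall_exists_ne {X ι κ β A : Type*} [Fintype X] [Fintype A]
    [DecidableEq ι] {f : X → ι → A} {E : Finset ι}
    (hf : ∀ x x', (∀ e ∈ E, f x e = f x' e) → x = x') {Ω : Finset β} {D : Finset κ}
    {b : κ → β → ι} (hb : ∀ t ∈ D, Set.InjOn (b t) Ω) (hbE : ∀ t ∈ D, ∀ o ∈ Ω, b t o ∈ E)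
    (hD : (D : Set κ).PairwiseDisjoint fun t => Ω.image (b t)) {v : β → A}
    (hv : ∀ x, ∀ t ∈ D, ∃ o ∈ Ω, f x (b t o) ≠ v o) :
    Fintype.card X * (Fintype.card A ^ #Ω) ^ #D
      ≤ (Fintype.card A ^ #Ω - 1) ^ #D * Fintype.card A ^ #E := by
  classical
  set U := D.biUnion fun t => Ω.image (b t)
  have hUE : U ⊆ E := by
    simp only [U, biUnion_subset, image_subset_iff]
    exact hbE
  have hU : #U = #D * #Ω := by
    rw [card_biUnion hD, sum_congr rfl fun t ht => card_image_of_injOn (hb t ht), sum_const,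
      smul_eq_mul]
  let Ψ : X → (D → {p : Ω → A // p ≠ fun o : Ω => v o}) × (↥(E \ U) → A) := fun x =>
    (fun t => ⟨fun o => f x (b t o), fun h =>
      have ⟨o, ho, hne⟩ := hv x t t.2
      hne (congrFun h ⟨o, ho⟩)⟩, fun e => f x e)
  have hΨ : Injective Ψ := by
    intro x x' h
    simp only [Ψ, Prod.mk.injEq, funext_iff, Subtype.forall, Subtype.mk.injEq] at h
    refine hf x x' fun e he => ?_
    by_cases heU : e ∈ U
    · obtain ⟨t, ht, he⟩ := mem_biUnion.1 heU
      obtain ⟨o, ho, rfl⟩ := mem_image.1 he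
      exact h.1 t ht o ho
    · exact h.2 e (mem_sdiff.2 ⟨he, heU⟩)
  have hcard := Fintype.card_le_of_injective Ψ hΨ
  rw [Fintype.card_prod, Fintype.card_pi, Fintype.card_fun, Fintype.card_coe,
    card_sdiff_of_subset hUE, hU] at hcard
  have hforb : Fintype.card {p : Ω → A // p ≠ fun o : Ω => v o} = Fintype.card A ^ #Ω - 1 := by
    rw [Fintype.card_subtype_compl, Fintype.card_subtype_eq, Fintype.card_fun, Fintype.card_coe]
  rw [prod_const, hforb, card_univ, Fintype.card_coe] at hcard
  calc Fintype.card X * (Fintype.card A ^ #Ω) ^ #D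
      ≤ (Fintype.card A ^ #Ω - 1) ^ #D * Fintype.card A ^ (#E - #D * #Ω)
          * Fintype.card A ^ (#D * #Ω) := by
        rw [← pow_mul, mul_comm #Ω]; gcongr
    _ = _ := by rw [mul_assoc, ← pow_add, Nat.sub_add_cancel (hU ▸ card_le_card hUE)]

section CellularAutomaton

variable {S A : Type*}

def cellularAutomaton [Mul S] (M : Finset S) (μ : (M → A) → A) (x : S → A) (s : S) : A :=
  μ fun m => x (m * s)

def PreInjective (τ : (S → A) → S → A) : Prop :=
  ∀ x₁ x₂ : S → A, (∃ Φ : Finset S, ∀ s ∉ Φ, x₁ s = x₂ s) → τ x₁ = τ x₂ → x₁ = x₂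

def FolnerCondition (S : Type*) [Mul S] [DecidableEq S] : Prop :=
  ∀ (K : Finset S) (ε : ℝ), 0 < ε → ∃ F : Finset S, F.Nonempty ∧
    ∀ k ∈ K, (#(F.image (k * ·) \ F) : ℝ) ≤ ε * #F

theorem continuous_cellularAutomaton [Mul S] [TopologicalSpace A] [DiscreteTopology A]
    (M : Finset S) (μ : (M → A) → A) : Continuous (cellularAutomaton M μ) :=
  continuous_pi fun _ =>
    continuous_of_discreteTopology.comp (continuous_pi fun _ => continuous_apply _)

theorem cellularAutomaton_apply_mul [Semigroup S] (M : Finset S) (μ : (M → A) → A)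
    (x : S → A) (s t : S) :
    cellularAutomaton M μ x (s * t) = cellularAutomaton M μ (fun u => x (u * t)) s := by
  simp only [cellularAutomaton, mul_assoc]

section Thickening

variable [Mul S] [IsLeftCancelMul S] [DecidableEq S]

noncomputable def mulThickening (K F : Finset S) : Finset S :=
  F ∪ K.biUnion fun k => F.preimage (k * ·) (mul_right_injective k).injOn ∪ F.image (k * ·)

variable {K F : Finset S} {k t : S}

theorem mem_mulThickening_of_mul_mem (hk : k ∈ K) (h : k * t ∈ F) : t ∈ mulThickening K F :=
  mem_union_right _ <| mem_biUnion.2 ⟨k, hk, mem_union_left _ (mem_preimage.2 h)⟩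

theorem mul_mem_mulThickening (hk : k ∈ K) (ht : t ∈ F) : k * t ∈ mulThickening K F :=
  mem_union_right _ <| mem_biUnion.2 ⟨k, hk, mem_union_right _ (mem_image_of_mem _ ht)⟩

theorem card_mulThickening_le {n : ℕ} (hF : ∀ k ∈ K, n * #(F.image (k * ·) \ F) ≤ #F) :
    n * #(mulThickening K F) ≤ (n + 2 * #K) * #F := by
  have hsub : mulThickening K F ⊆ F ∪ K.biUnion fun k =>
      (F.preimage (k * ·) (mul_right_injective k).injOn \ F) ∪ (F.image (k * ·) \ F) := by
    intro s hs
    by_cases hsF : s ∈ F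
    · exact mem_union_left _ hsF
    simpa only [mulThickening, mem_union, mem_biUnion, mem_sdiff, hsF, not_false_eq_true,
      and_true, false_or] using hs
  have hcard : #(mulThickening K F) ≤ #F + ∑ k ∈ K, 2 * #(F.image (k * ·) \ F) :=
    calc #(mulThickening K F)
        ≤ #F + ∑ k ∈ K, #((F.preimage (k * ·) (mul_right_injective k).injOn \ F) ∪
            (F.image (k * ·) \ F)) :=
          (card_le_card hsub).trans ((card_union_le _ _).trans (by gcongr; exact card_biUnion_le))
      _ ≤ #F + ∑ k ∈ K, 2 * #(F.image (k * ·) \ F) := by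
          gcongr with k
          linarith [card_union_le (F.preimage (k * ·) (mul_right_injective k).injOn \ F)
            (F.image (k * ·) \ F), card_preimage_sdiff_le (mul_right_injective k) F]
  calc n * #(mulThickening K F) ≤ n * (#F + ∑ k ∈ K, 2 * #(F.image (k * ·) \ F)) := by gcongr
    _ = n * #F + ∑ k ∈ K, 2 * (n * #(F.image (k * ·) \ F)) := by
        rw [mul_add, mul_sum]; exact congrArg _ (sum_congr rfl fun _ _ => by ring)
    _ ≤ n * #F + ∑ _k ∈ K, 2 * #F := by gcongr with k hk; exact hF k hk
    _ = (n + 2 * #K) * #F := by rw [sum_const, smul_eq_mul]; ring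

theorem card_filter_not_disjoint_image_mul_le (Ω T : Finset S) (t : S) :
    #{s ∈ T | ¬Disjoint (Ω.image (· * s)) (Ω.image (· * t))} ≤ #Ω * #Ω := by
  rw [← card_product]
  refine card_le_card_of_forall_subsingleton (fun s p => p.1 * s = p.2 * t)
    (fun s hs => ?_) (fun p _ s hs s' hs' => mul_left_cancel (hs.2.trans hs'.2.symm))
  obtain ⟨z, hz, hz'⟩ := not_disjoint_iff.1 (mem_filter.1 hs).2
  obtain ⟨ω, hω, rfl⟩ := mem_image.1 hz
  obtain ⟨ω', hω', he⟩ := mem_image.1 hz'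
  exact ⟨(ω, ω'), mem_product.2 ⟨hω, hω'⟩, he.symm⟩

end Thickening

variable [Semigroup S] [IsCancelMul S] [DecidableEq S] [Fintype A] {M : Finset S}
  {μ : (M → A) → A}

theorem pow_card_mul_le_of_forall_exists_ne (hpre : PreInjective (cellularAutomaton M μ))
    (a₀ : A) {Ω : Finset S} {v : S → A}
    (horph : ∀ x t, ∃ ω ∈ Ω, cellularAutomaton M μ x (ω * t) ≠ v ω) {F D : Finset S}
    (hDF : D ⊆ F) (hD : (D : Set S).PairwiseDisjoint fun t => Ω.image (· * t)) :
    Fintype.card A ^ #F * (Fintype.card A ^ #Ω) ^ #D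
      ≤ (Fintype.card A ^ #Ω - 1) ^ #D * Fintype.card A ^ #(mulThickening (M ∪ Ω) F) := by
  let ext (u : F → A) : S → A := extend Subtype.val u fun _ => a₀
  have ext_of_notMem (u : F → A) {s : S} (hs : s ∉ F) : ext u s = a₀ :=
    extend_apply' _ _ _ fun ⟨s', hs'⟩ => hs (hs' ▸ s'.2)
  have hinj (u u' : F → A) (h : ∀ e ∈ mulThickening (M ∪ Ω) F,
      cellularAutomaton M μ (ext u) e = cellularAutomaton M μ (ext u') e) : u = u' := by
    have hagree : cellularAutomaton M μ (ext u) = cellularAutomaton M μ (ext u') := by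
      funext e
      by_cases he : e ∈ mulThickening (M ∪ Ω) F
      · exact h e he
      · refine congrArg μ (funext fun m => ?_)
        have hm : ↑m * e ∉ F := fun hm => he (mem_mulThickening_of_mul_mem
          (mem_union_left _ m.2) hm)
        rw [ext_of_notMem u hm, ext_of_notMem u' hm]
    have := hpre _ _ ⟨F, fun s hs => by rw [ext_of_notMem u hs, ext_of_notMem u' hs]⟩ hagree
    funext s
    simpa [ext, Subtype.val_injective.extend_apply] using congrFun this s
  have := card_mul_pow_le_of_forall_exists_ne (X := F → A) hinj (b := fun t ω => ω * t)
    (fun t _ => (mul_left_injective t).injOn)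
    (fun t ht ω hω => mul_mem_mulThickening (mem_union_right _ hω) (hDF ht)) hD
    (fun u t _ => horph (ext u) t)
  rwa [Fintype.card_fun, Fintype.card_coe] at this

theorem exists_cellularAutomaton_eqOn (hFol : FolnerCondition S)
    (hpre : PreInjective (cellularAutomaton M μ)) (v : S → A) (Ω : Finset S) :
    ∃ x, Set.EqOn (cellularAutomaton M μ x) v Ω := by
  by_contra! h
  simp only [Set.EqOn, mem_coe, not_forall, exists_prop] at h
  have horph (x : S → A) (t : S) : ∃ ω ∈ Ω, cellularAutomaton M μ x (ω * t) ≠ v ω := by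
    simpa only [cellularAutomaton_apply_mul] using h fun s => x (s * t)
  obtain ⟨ω₀, hω₀, -⟩ := h v
  set q := Fintype.card A
  set r := q ^ #Ω
  have hq : 0 < q := Fintype.card_pos_iff.2 ⟨v ω₀⟩
  -- `n` is chosen so that the loss of the excluded patterns outweighs a thickening of ratio
  -- `1 + 2 |M ∪ Ω| / n`
  obtain ⟨n, hn, hlt⟩ := exists_mul_pow_lt_succ_pow (q ^ (2 * #(M ∪ Ω) * (#Ω * #Ω))) (r - 1)
  obtain ⟨F, hFne, hF⟩ := hFol (M ∪ Ω) (1 / n) (by positivity)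
  have hFn : ∀ k ∈ M ∪ Ω, n * #(F.image (k * ·) \ F) ≤ #F := fun k hk => by
    have := hF k hk
    rw [one_div_mul_eq_div, le_div_iff₀ (by positivity)] at this
    exact_mod_cast (mul_comm _ _).trans_le this
  obtain ⟨D, hDF, hD, hFD⟩ := exists_pairwiseDisjoint_subset_card_le_mul
    (fun t => Ω.image (· * t)) F (#Ω * #Ω) (fun _ _ => ⟨_, mem_image_of_mem _ hω₀⟩)
    (fun t _ => card_filter_not_disjoint_image_mul_le Ω F t)
  have hD0 : #D ≠ 0 := fun h0 => hFne.ne_empty (card_eq_zero.1 (by simpa [h0] using hFD))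
  have hle := pow_le_mul_pow_of_mul_pow_le hq hD0
    (pow_card_mul_le_of_forall_exists_ne hpre (v ω₀) horph hDF hD)
    (card_mulThickening_le hFn) hFD
  rw [Nat.sub_add_cancel (Nat.one_le_iff_ne_zero.2 (pow_pos hq _).ne')] at hlt
  linarith [mul_comm (q ^ (2 * #(M ∪ Ω) * (#Ω * #Ω))) ((r - 1) ^ n)]

end CellularAutomaton

/-- **Myhill property for cancellative left-amenable semigroups.** Let `S` be a
cancellative semigroup satisfying the Følner condition (which, for cancellative
semigroups, is equivalent to left-amenability) and let `A` be a finite alphabet.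
Then every pre-injective cellular automaton `τ : A^S → A^S` is surjective. -/
theorem myhill_semigroup {S A : Type*} [Semigroup S] [Fintype A] [DecidableEq S]
    (hlc : ∀ s : S, Function.Injective (fun t : S => s * t))
    (hrc : ∀ s : S, Function.Injective (fun t : S => t * s))
    (hFol : ∀ (K : Finset S) (ε : ℝ), 0 < ε → ∃ F : Finset S, F.Nonempty ∧
      ∀ k ∈ K, (((F.image (fun t : S => k * t)) \ F).card : ℝ) ≤ ε * F.card)
    (τ : (S → A) → (S → A))
    (hτ : ∃ (M : Finset S) (μ : (M → A) → A),
      ∀ (x : S → A) (s : S), τ x s = μ (fun m => x (↑m * s)))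
    (hpre : ∀ x₁ x₂ : S → A, (∃ Φ : Finset S, ∀ s ∉ Φ, x₁ s = x₂ s) →
      τ x₁ = τ x₂ → x₁ = x₂) :
    Function.Surjective τ := by
  have : IsCancelMul S := { mul_left_cancel := hlc, mul_right_cancel := hrc }
  obtain ⟨M, μ, hμ⟩ := hτ
  obtain rfl : τ = cellularAutomaton M μ := funext fun x => funext (hμ x)
  let : TopologicalSpace A := ⊥
  have : DiscreteTopology A := ⟨rfl⟩
  intro y
  by_contra hy
  obtain ⟨Ω, hΩ⟩ := exists_finset_forall_exists_ne_of_notMem_range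
    (continuous_cellularAutomaton M μ) hy
  obtain ⟨x, hx⟩ := exists_cellularAutomaton_eqOn hFol hpre y Ω
  obtain ⟨ω, hω, hne⟩ := hΩ x
  exact hne (hx hω)
end

section
/- Let S be a semigroup admitting a left-cancellable element s₀ with s₀S ≠ S, and let A = {0,1}. Then the map τ : A^S → A^S defined by τ(x)(s) = x(s₀s) is a cellular automaton (with memory set {s₀}) which is surjective but not pre-injective. -/
/-- If `s₀` is a left-cancellable element of a semigroup `S` with `s₀S ≠ S`, then the
map `τ(x)(s) = x(s₀ s)` on `{0,1}^S` is a cellular automaton with memory set `{s₀}`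
which is surjective but not pre-injective. -/
theorem shift_surjective_not_preinjective {S : Type*} [Semigroup S] (s₀ : S)
    (hc : Function.Injective (fun t : S => s₀ * t))
    (hns : Set.range (fun t : S => s₀ * t) ≠ Set.univ) :
    (∃ μ : (({s₀} : Finset S) → Bool) → Bool,
        ∀ (x : S → Bool) (s : S), x (s₀ * s) = μ (fun m => x (↑m * s))) ∧
      Function.Surjective (fun (x : S → Bool) (s : S) => x (s₀ * s)) ∧
      ¬ (∀ x₁ x₂ : S → Bool, (∃ Φ : Finset S, ∀ s ∉ Φ, x₁ s = x₂ s) →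
          (fun s : S => x₁ (s₀ * s)) = (fun s : S => x₂ (s₀ * s)) → x₁ = x₂) := by
  classical
  obtain ⟨s₁, hs₁⟩ : ∃ s₁ : S, s₁ ∉ Set.range (fun t : S => s₀ * t) := by
    by_contra h
    push_neg at h
    exact hns (Set.eq_univ_of_forall h)
  refine ⟨⟨fun f => f ⟨s₀, Finset.mem_singleton_self s₀⟩, fun x s => rfl⟩, ?_, ?_⟩
  · intro y
    refine ⟨fun s => if h : ∃ t, s₀ * t = s then y h.choose else false, ?_⟩
    funext s
    have h : ∃ t, s₀ * t = s₀ * s := ⟨s, rfl⟩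
    simp only [dif_pos h]
    have := hc (h.choose_spec : s₀ * h.choose = s₀ * s)
    rw [this]
  · intro H
    have := H (fun s => if s = s₁ then true else false) (fun _ => false)
      ⟨{s₁}, fun s hs => by simp at hs; simp [hs]⟩
      (by
        funext s
        have : s₀ * s ≠ s₁ := fun h => hs₁ ⟨s, h⟩
        simp [this])
    have h1 := congrFun this s₁
    simp at h1
end
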